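/- Let c, m > 0 and θ ∈ ℝ, and define γ : ℝ → ℝ³ by γ(s) = m·e^{(cos θ/√(1+c²))·s}·(c·cos((sin θ/c)·s), c·sin((sin θ/c)·s), 1). Then γ has hyperbolic unit speed, and its hyperbolic covariant acceleration A(s) = γ''(s) − (2·γ₃'(s)/γ₃(s))·γ'(s) + (‖γ'(s)‖ₑ²/γ₃(s))·e₃ satisfies ‖A(s)‖ₑ/γ₃(s) = (c² + sin²θ)/(c·√(1+c²)) for all s; that is, the hyperbolic curvature of γ is constant and equals (c² + sin²θ)/(c·√(1+c²)). -/

import Mathlib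

open Real
open scoped RealInnerProductSpace

/-- A point/vector of Euclidean 3-space. -/
noncomputable def v3 (x y z : ℝ) : EuclideanSpace ℝ (Fin 3) := WithLp.toLp 2 ![x, y, z]

/-- Hyperbolic (upper half-space) inner product of u and v at the point p. -/
noncomputable def hInner (p u v : EuclideanSpace ℝ (Fin 3)) : ℝ := ⟪u, v⟫ / (p 2) ^ 2

/-- Hyperbolic (upper half-space) norm of v at the point p. -/
noncomputable def hNorm (p v : EuclideanSpace ℝ (Fin 3)) : ℝ := ‖v‖ / p 2

/-- Covariant acceleration ∇_{γ'}γ' of a hyperbolic unit-speed curve in the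
upper half-space model: A(s) = γ''(s) − (2γ₃'(s)/γ₃(s))·γ'(s) + (‖γ'(s)‖ₑ²/γ₃(s))·e₃. -/
noncomputable def hAccel (γ : ℝ → EuclideanSpace ℝ (Fin 3)) (s : ℝ) :
    EuclideanSpace ℝ (Fin 3) :=
  deriv (deriv γ) s - (2 * deriv (fun t => γ t 2) s / γ s 2) • deriv γ s
    + (‖deriv γ s‖ ^ 2 / γ s 2) • v3 0 0 1


/-!
The curve is the conical spiral `s ↦ e^{a s} R_{b s}(m c, 0, m)` with `a = cos θ / √(1 + c²)`,
`b = sin θ / c` and `R_t` the rotation about the `x₃`-axis. Differentiation maps such spirals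
to spirals, so `γ'`, `γ''` and the covariant acceleration are spirals again, and all of them
scale by `e^{a s}` exactly as the height `γ₃` does. Hence the speed `‖γ'‖ₑ / γ₃` and the
curvature `‖A‖ₑ / γ₃` are constant; unit speed is the identity `(a² + b²) c² + a² = 1`.
-/

noncomputable def spiral (a b p q r s : ℝ) : EuclideanSpace ℝ (Fin 3) :=
  v3 (exp (a * s) * (p * cos (b * s) - q * sin (b * s)))
    (exp (a * s) * (p * sin (b * s) + q * cos (b * s))) (exp (a * s) * r)

lemma norm_v3 (x y z : ℝ) : ‖v3 x y z‖ = √(x ^ 2 + y ^ 2 + z ^ 2) := by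
  simp [EuclideanSpace.norm_eq, v3, Fin.sum_univ_three, sq_abs]

lemma HasDerivAt.v3 {f g h : ℝ → ℝ} {f' g' h' s : ℝ}
    (hf : HasDerivAt f f' s) (hg : HasDerivAt g g' s) (hh : HasDerivAt h h' s) :
    HasDerivAt (fun t => _root_.v3 (f t) (g t) (h t)) (_root_.v3 f' g' h') s := by
  have hsum : ∀ x y z : ℝ,
      _root_.v3 x y z = x • _root_.v3 1 0 0 + y • _root_.v3 0 1 0 + z • _root_.v3 0 0 1 := by
    intro x y z; ext i; fin_cases i <;> simp [_root_.v3]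
  rw [funext fun t => hsum (f t) (g t) (h t), hsum f' g' h']
  exact ((hf.smul_const _).add (hg.smul_const _)).add (hh.smul_const _)

section spiral

variable {a b p q r : ℝ}

lemma spiral_apply_two (s : ℝ) : spiral a b p q r s 2 = exp (a * s) * r := by
  simp [spiral, v3]

lemma norm_spiral (s : ℝ) :
    ‖spiral a b p q r s‖ = exp (a * s) * √(p ^ 2 + q ^ 2 + r ^ 2) := by
  have hsum : (exp (a * s) * (p * cos (b * s) - q * sin (b * s))) ^ 2
      + (exp (a * s) * (p * sin (b * s) + q * cos (b * s))) ^ 2 + (exp (a * s) * r) ^ 2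
      = exp (a * s) ^ 2 * (p ^ 2 + q ^ 2 + r ^ 2) := by
    linear_combination exp (a * s) ^ 2 * (p ^ 2 + q ^ 2) * sin_sq_add_cos_sq (b * s)
  rw [spiral, norm_v3, hsum, sqrt_mul (sq_nonneg _), sqrt_sq (exp_pos _).le]

/-- Differentiating multiplies `p + i q` by `a + i b` and `r` by `a`. -/
lemma hasDerivAt_spiral (s : ℝ) :
    HasDerivAt (spiral a b p q r) (spiral a b (a * p - b * q) (a * q + b * p) (a * r) s) s := by
  have hexp : HasDerivAt (fun t => exp (a * t)) (exp (a * s) * a) s := by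
    simpa using ((hasDerivAt_id s).const_mul a).exp
  have hcos : HasDerivAt (fun t => cos (b * t)) (-sin (b * s) * b) s := by
    simpa using ((hasDerivAt_id s).const_mul b).cos
  have hsin : HasDerivAt (fun t => sin (b * t)) (cos (b * s) * b) s := by
    simpa using ((hasDerivAt_id s).const_mul b).sin
  refine HasDerivAt.v3 ?_ ?_ ?_
  · exact (hexp.mul ((hcos.const_mul p).sub (hsin.const_mul q))).congr_deriv
      (by simp only [Pi.sub_apply]; ring)
  · exact (hexp.mul ((hsin.const_mul p).add (hcos.const_mul q))).congr_deriv
      (by simp only [Pi.add_apply]; ring)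
  · exact (hexp.mul_const r).congr_deriv (by ring)

lemma deriv_spiral :
    deriv (spiral a b p q r) = spiral a b (a * p - b * q) (a * q + b * p) (a * r) :=
  funext fun s => (hasDerivAt_spiral s).deriv

lemma norm_deriv_spiral (s : ℝ) :
    ‖deriv (spiral a b p q r) s‖
      = exp (a * s) * √((a ^ 2 + b ^ 2) * (p ^ 2 + q ^ 2) + a ^ 2 * r ^ 2) := by
  rw [deriv_spiral, norm_spiral]
  ring_nf

lemma hAccel_spiral (hr : r ≠ 0) (s : ℝ) :
    hAccel (spiral a b p q r) s
      = (a ^ 2 + b ^ 2) • spiral a b (-p) (-q) ((p ^ 2 + q ^ 2) / r) s := by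
  have hheight : deriv (fun t => spiral a b p q r t 2) s = exp (a * s) * (a * r) := by
    simp only [spiral_apply_two]
    exact (((hasDerivAt_id s).const_mul a).exp.mul_const r).deriv.trans (by simp only [id_eq, mul_one]; ring)
  have hexp : exp (a * s) ≠ 0 := (exp_pos _).ne'
  rw [hAccel, hheight, deriv_spiral, deriv_spiral, norm_spiral, spiral_apply_two, mul_pow,
    sq_sqrt (by positivity)]
  ext i; fin_cases i <;> simp [spiral, v3] <;> field_simp <;> ring

lemma norm_hAccel_spiral_div (hr : r ≠ 0) (s : ℝ) :
    ‖hAccel (spiral a b p q r) s‖ / spiral a b p q r s 2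
      = (a ^ 2 + b ^ 2) * √(p ^ 2 + q ^ 2 + ((p ^ 2 + q ^ 2) / r) ^ 2) / r := by
  rw [hAccel_spiral hr, norm_smul, norm_spiral, spiral_apply_two,
    norm_of_nonneg (by positivity)]
  field_simp

end spiral

/-- The helix γ(s) = m·e^{(cos θ/√(1+c²))s}·(c cos((sin θ/c)s),
c sin((sin θ/c)s), 1) has hyperbolic unit speed and constant hyperbolic curvature
(c² + sin²θ)/(c√(1+c²)). -/
theorem stmt_10 (c m θ : ℝ) (hc : 0 < c) (hm : 0 < m)
    (γ : ℝ → EuclideanSpace ℝ (Fin 3))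
    (hγ : γ = fun s => (m * Real.exp ((Real.cos θ / Real.sqrt (1 + c ^ 2)) * s)) •
        v3 (c * Real.cos ((Real.sin θ / c) * s)) (c * Real.sin ((Real.sin θ / c) * s)) 1) :
    (∀ s, ‖deriv γ s‖ = γ s 2) ∧
    (∀ s, ‖hAccel γ s‖ / γ s 2
        = (c ^ 2 + Real.sin θ ^ 2) / (c * Real.sqrt (1 + c ^ 2))) := by
  set a := cos θ / √(1 + c ^ 2)
  set b := sin θ / c
  replace hγ : γ = spiral a b (m * c) 0 m := by
    rw [hγ]; funext s; ext i; fin_cases i <;> simp [spiral, v3] <;> ring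
  have hsq : √(1 + c ^ 2) ^ 2 = 1 + c ^ 2 := sq_sqrt (by positivity)
  have hunit : (a ^ 2 + b ^ 2) * c ^ 2 + a ^ 2 = 1 := by
    simp only [a, b, div_pow, hsq]
    field_simp
    linear_combination (1 + c ^ 2) * sin_sq_add_cos_sq θ
  subst hγ
  refine ⟨fun s => ?_, fun s => ?_⟩
  · have hspeed : (a ^ 2 + b ^ 2) * ((m * c) ^ 2 + 0 ^ 2) + a ^ 2 * m ^ 2 = m ^ 2 := by
      linear_combination m ^ 2 * hunit
    rw [norm_deriv_spiral, spiral_apply_two, hspeed, sqrt_sq hm.le]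
  · have hnorm : (m * c) ^ 2 + 0 ^ 2 + (((m * c) ^ 2 + 0 ^ 2) / m) ^ 2
        = (m * c * √(1 + c ^ 2)) ^ 2 := by
      field_simp
      rw [hsq]
      ring
    rw [norm_hAccel_spiral_div hm.ne', hnorm, sqrt_sq (by positivity)]
    simp only [a, b]
    field_simp
    rw [hsq]
    linear_combination c ^ 2 * sin_sq_add_cos_sq θ
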